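/- arXiv:0707.4136 — 2 statements merged into one kernel-verified Lean document; each statement's English description precedes it below -/
import Mathlib

section
/- Every element of the special unitary group SU(2) can be written in Euler-angle form: for every U in SU(2) there exist real numbers φ ∈ [0, 2π], θ ∈ [0, π] and ψ ∈ [0, 2π] such that U = k_φ · a_θ · k_ψ. -/
open Matrix Real

/-- The matrix `k_t = diag(e^{it}, e^{-it})`. -/
noncomputable def eulerK (t : ℝ) : Matrix (Fin 2) (Fin 2) ℂ :=
  !![Complex.exp (Complex.I * t), 0; 0, Complex.exp (-(Complex.I * t))]

/-- The matrix `a_θ` with rows `(cos(θ/2), i sin(θ/2))` and `(i sin(θ/2), cos(θ/2))`. -/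
noncomputable def eulerA (θ : ℝ) : Matrix (Fin 2) (Fin 2) ℂ :=
  !![(Real.cos (θ / 2) : ℂ), Complex.I * (Real.sin (θ / 2) : ℂ);
     Complex.I * (Real.sin (θ / 2) : ℂ), (Real.cos (θ / 2) : ℂ)]

/-!
A matrix in `SU(2)` satisfies `U⋆ = U⁻¹ = adj U`, so it is `!![a, b; -b̄, ā]` with
`‖a‖² + ‖b‖² = 1`. Multiplying out, `k_φ a_θ k_ψ` is of this form with `a = e^{i(φ+ψ)} cos(θ/2)` and
`b = i e^{i(φ-ψ)} sin(θ/2)`, so one takes `θ/2 = arcsin ‖b‖` and reads `φ ± ψ` off the arguments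
of `a` and `b`. As `k_t` is `2π`-periodic in `t`, `φ` and `ψ` can finally be reduced into `[0, 2π)`.
-/

def cayleyKleinMatrix {R : Type*} [Neg R] [Star R] (a b : R) : Matrix (Fin 2) (Fin 2) R :=
  !![a, b; -star b, star a]

theorem star_eq_adjugate_of_mem_specialUnitaryGroup {n R : Type*} [Fintype n] [DecidableEq n]
    [CommRing R] [StarRing R] {A : Matrix n n R} (hA : A ∈ specialUnitaryGroup n R) :
    star A = A.adjugate := by
  obtain ⟨hu, hdet⟩ := mem_specialUnitaryGroup_iff.mp hA
  calc star A = star A * (A * A.adjugate) := by rw [mul_adjugate, hdet, one_smul, mul_one]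
    _ = A.adjugate := by rw [← mul_assoc, mem_unitaryGroup_iff'.mp hu, one_mul]

theorem eq_cayleyKleinMatrix_of_mem_specialUnitaryGroup {R : Type*} [CommRing R] [StarRing R]
    {A : Matrix (Fin 2) (Fin 2) R} (hA : A ∈ specialUnitaryGroup (Fin 2) R) :
    A = cayleyKleinMatrix (A 0 0) (A 0 1) := by
  have h := star_eq_adjugate_of_mem_specialUnitaryGroup hA
  rw [adjugate_fin_two] at h
  have h01 : star (A 0 1) = -A 1 0 := by simpa using congrFun₂ h 1 0
  have h00 : star (A 0 0) = A 1 1 := by simpa using congrFun₂ h 0 0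
  rw [cayleyKleinMatrix, h01, h00, neg_neg]
  exact (etaExpand_eq A).symm

theorem norm_sq_add_norm_sq_of_mem_specialUnitaryGroup {A : Matrix (Fin 2) (Fin 2) ℂ}
    (hA : A ∈ specialUnitaryGroup (Fin 2) ℂ) : ‖A 0 0‖ ^ 2 + ‖A 0 1‖ ^ 2 = 1 := by
  have hdet := congrArg Complex.re (mem_specialUnitaryGroup_iff.mp hA).2
  rw [eq_cayleyKleinMatrix_of_mem_specialUnitaryGroup hA, cayleyKleinMatrix, det_fin_two_of]
    at hdet
  simp only [Complex.star_def, mul_neg, sub_neg_eq_add, Complex.mul_conj, Complex.add_re,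
    Complex.ofReal_re, Complex.one_re] at hdet
  simpa only [Complex.sq_norm] using hdet

theorem eulerK_periodic : Function.Periodic eulerK (2 * π) := by
  intro t
  have h : Complex.exp (Complex.I * ↑(t + 2 * π)) = Complex.exp (Complex.I * t) := by
    push_cast
    rw [mul_add, Complex.exp_add, mul_comm Complex.I (2 * π), Complex.exp_two_pi_mul_I, mul_one]
  simp only [eulerK, Complex.exp_neg, h]

theorem eulerK_toIcoMod (t : ℝ) : eulerK (toIcoMod two_pi_pos 0 t) = eulerK t := by
  rw [← self_sub_toIcoDiv_zsmul]
  exact eulerK_periodic.sub_zsmul_eq _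

open Complex in
theorem eulerK_mul_eulerA_mul_eulerK (φ θ ψ : ℝ) :
    eulerK φ * eulerA θ * eulerK ψ =
      cayleyKleinMatrix (exp (I * (φ + ψ)) * Real.cos (θ / 2))
        (I * exp (I * (φ - ψ)) * Real.sin (θ / 2)) := by
  simp [cayleyKleinMatrix, eulerK, eulerA, ← exp_conj, mul_add, mul_sub, Complex.exp_add,
    Complex.exp_sub, Complex.exp_neg, -Complex.ofReal_cos, -Complex.ofReal_sin]
  refine ⟨⟨?_, ?_⟩, ?_, ?_⟩ <;> ring

open Complex in
theorem exists_euler_angles_of_norm_sq_add_norm_sq {a b : ℂ} (h : ‖a‖ ^ 2 + ‖b‖ ^ 2 = 1) :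
    ∃ φ θ ψ : ℝ, θ ∈ Set.Icc 0 π ∧ exp (I * (φ + ψ)) * Real.cos (θ / 2) = a ∧
      I * exp (I * (φ - ψ)) * Real.sin (θ / 2) = b := by
  obtain ⟨φ, ψ, hsum, hdiff⟩ : ∃ φ ψ : ℝ, φ + ψ = arg a ∧ φ - ψ = arg b - π / 2 :=
    ⟨(arg a + (arg b - π / 2)) / 2, (arg a - (arg b - π / 2)) / 2, by ring, by ring⟩
  have hb : ‖b‖ ≤ 1 := by nlinarith [norm_nonneg a, norm_nonneg b]
  have hcos : Real.cos (2 * arcsin ‖b‖ / 2) = ‖a‖ := by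
    rw [mul_div_cancel_left₀ _ two_ne_zero, cos_arcsin, ← h, add_sub_cancel_right,
      sqrt_sq (norm_nonneg a)]
  have hsin : Real.sin (2 * arcsin ‖b‖ / 2) = ‖b‖ := by
    rw [mul_div_cancel_left₀ _ two_ne_zero, sin_arcsin (by linarith [norm_nonneg b]) hb]
  refine ⟨φ, 2 * arcsin ‖b‖, ψ,
    ⟨by linarith [arcsin_nonneg.mpr (norm_nonneg b)], by linarith [arcsin_le_pi_div_two ‖b‖]⟩,
    ?_, ?_⟩
  · rw [← ofReal_add, hsum, hcos, mul_comm I, mul_comm, norm_mul_exp_arg_mul_I]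
  · have hexp : I * exp (I * (arg b - π / 2 : ℝ)) = exp (arg b * I) := by
      rw [show I * (arg b - π / 2 : ℝ) = arg b * I - π / 2 * I by push_cast; ring,
        Complex.exp_sub, exp_pi_div_two_mul_I, mul_div_cancel₀ _ I_ne_zero]
    rw [← ofReal_sub, hdiff, hexp, hsin, mul_comm, norm_mul_exp_arg_mul_I]

/-- Every element of SU(2) admits an Euler-angle decomposition
`U = k_φ · a_θ · k_ψ` with `φ ∈ [0, 2π]`, `θ ∈ [0, π]`, `ψ ∈ [0, 2π]`. -/
theorem SU2_euler_angle_surjective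
    (U : Matrix.specialUnitaryGroup (Fin 2) ℂ) :
    ∃ φ θ ψ : ℝ, φ ∈ Set.Icc 0 (2 * π) ∧ θ ∈ Set.Icc 0 π ∧ ψ ∈ Set.Icc 0 (2 * π) ∧
      (U : Matrix (Fin 2) (Fin 2) ℂ) = eulerK φ * eulerA θ * eulerK ψ := by
  obtain ⟨φ, θ, ψ, hθ, ha, hb⟩ := exists_euler_angles_of_norm_sq_add_norm_sq
    (norm_sq_add_norm_sq_of_mem_specialUnitaryGroup U.2)
  refine ⟨toIcoMod two_pi_pos 0 φ, θ, toIcoMod two_pi_pos 0 ψ,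
    Set.Ico_subset_Icc_self (toIcoMod_mem_Ico' _ _), hθ,
    Set.Ico_subset_Icc_self (toIcoMod_mem_Ico' _ _), ?_⟩
  rw [eulerK_toIcoMod, eulerK_toIcoMod, eulerK_mul_eulerA_mul_eulerK, ha, hb]
  exact eq_cayleyKleinMatrix_of_mem_specialUnitaryGroup U.2
end

section
/- The Euler-angle parametrization of SU(2) is two-to-one on the open box: for (φ,θ,ψ) and (φ',θ',ψ') both in (0,2π) × (0,π) × (0,2π), one has k_{φ'} · a_{θ'} · k_{ψ'} = k_φ · a_θ · k_ψ if and only if θ' = θ and either (φ' = φ and ψ' = ψ), or (φ' ≡ φ + π (mod 2π) and ψ' ≡ ψ + π (mod 2π)). In particular, k_{φ+π} · a_θ · k_{ψ+π} = k_φ · a_θ · k_ψ for all real φ, θ, ψ. -/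
open Matrix Real

/-!
In the product `k_φ a_θ k_ψ` the first row is
`(e^{i(φ+ψ)} cos(θ/2), i e^{i(φ-ψ)} sin(θ/2))`. For `θ ∈ (0,π)` both trigonometric factors are
positive, so the product determines `θ` and the angles `φ + ψ`, `φ - ψ` modulo `2π`. Hence it
determines `2φ` modulo `2π`, i.e. `φ` up to `π`, and then `ψ` up to the same shift; conversely,
shifting by `π` negates both `k`'s.
-/

open Complex in
lemma Complex.exp_I_mul_eq_exp_I_mul_iff {x y : ℝ} :
    exp (I * x) = exp (I * y) ↔ (x : Angle) = y := by
  have hinj : Function.Injective Angle.toCircle :=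
    Function.LeftInverse.injective (g := fun z : Circle ↦ (arg z : Angle)) Angle.arg_toCircle
  rw [← hinj.eq_iff, Angle.toCircle_coe, Angle.toCircle_coe, ← Circle.coe_inj, Circle.coe_exp,
    Circle.coe_exp, mul_comm I, mul_comm I]

lemma Real.Angle.coe_eq_coe_iff_of_mem_Ico {x y : ℝ} (hx : x ∈ Set.Ico 0 (2 * π))
    (hy : y ∈ Set.Ico 0 (2 * π)) : (x : Angle) = y ↔ x = y := by
  refine ⟨fun h ↦ Circle.exp_injOn_Ico (by simp) hx hy ?_, congrArg _⟩
  rw [← Angle.toCircle_coe, ← Angle.toCircle_coe, h]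

lemma Real.Angle.coe_eq_coe_add_pi_iff {x y : ℝ} :
    (x : Angle) = y + π ↔ ∃ m : ℤ, x = y + π + 2 * π * m := by
  rw [← Angle.coe_add, Angle.angle_eq_iff_two_pi_dvd_sub]
  simp only [sub_eq_iff_eq_add']

lemma Real.Angle.eq_and_eq_or_of_add_eq_of_sub_eq {a b a' b' : Angle} (hadd : a' + b' = a + b)
    (hsub : a' - b' = a - b) : (a' = a ∧ b' = b) ∨ (a' = a + π ∧ b' = b + π) := by
  have h2 : (2 : ℕ) • a' = (2 : ℕ) • a := by
    rw [two_nsmul, two_nsmul]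
    calc a' + a' = (a' + b') + (a' - b') := by abel
      _ = a + a := by rw [hadd, hsub]; abel
  have hb : b' = a + b - a' := by rw [← hadd]; abel
  rcases Angle.two_nsmul_eq_iff.mp h2 with rfl | rfl
  · exact Or.inl ⟨rfl, by rw [hb]; abel⟩
  · refine Or.inr ⟨rfl, ?_⟩
    rw [hb, ← Angle.sub_coe_pi_eq_add_coe_pi]
    abel

lemma eulerK_add_pi (t : ℝ) : eulerK (t + π) = -eulerK t := by
  have h : Complex.exp (Complex.I * (t + π)) = -Complex.exp (Complex.I * t) := by
    rw [mul_add, Complex.exp_add, mul_comm Complex.I (π : ℂ), Complex.exp_pi_mul_I, mul_neg_one]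
  ext i j
  fin_cases i <;> fin_cases j <;> simp [eulerK, h, Complex.exp_neg]

lemma eulerK_congr {s t : ℝ} (h : (s : Angle) = t) : eulerK s = eulerK t := by
  rw [← Complex.exp_I_mul_eq_exp_I_mul_iff] at h
  simp [eulerK, Complex.exp_neg, h]

lemma eulerK_eq_diagonal (t : ℝ) :
    eulerK t = diagonal ![Complex.exp (Complex.I * t), Complex.exp (-(Complex.I * t))] :=
  (diagonal_vec2 _ _).symm

lemma eulerK_mul_mul_eulerK (φ ψ : ℝ) (M : Matrix (Fin 2) (Fin 2) ℂ) :
    eulerK φ * M * eulerK ψ = !![Complex.exp (Complex.I * ↑(φ + ψ)) * M 0 0,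
      Complex.exp (Complex.I * ↑(φ - ψ)) * M 0 1;
      Complex.exp (-(Complex.I * ↑(φ - ψ))) * M 1 0,
      Complex.exp (-(Complex.I * ↑(φ + ψ))) * M 1 1] := by
  ext i j
  fin_cases i <;> fin_cases j <;>
    simp only [eulerK_eq_diagonal, Fin.isValue, Fin.zero_eta, Fin.mk_one, mul_diagonal,
      diagonal_mul, of_apply, cons_val', cons_val_zero, cons_val_one, cons_val_fin_one,
      Complex.ofReal_add, Complex.ofReal_neg, sub_eq_add_neg, mul_add, mul_neg, neg_add_rev,
      neg_neg, Complex.exp_add] <;> ring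

lemma cos_half_pos {θ : ℝ} (hθ : θ ∈ Set.Ioo 0 π) : 0 < Real.cos (θ / 2) :=
  Real.cos_pos_of_mem_Ioo ⟨by linarith [hθ.1, pi_pos], by linarith [hθ.2]⟩

lemma sin_half_pos {θ : ℝ} (hθ : θ ∈ Set.Ioo 0 π) : 0 < Real.sin (θ / 2) :=
  Real.sin_pos_of_pos_of_lt_pi (by linarith [hθ.1]) (by linarith [hθ.2, pi_pos])

open Complex in
theorem eulerK_mul_eulerA_mul_eulerK_eq_iff {φ θ ψ φ' θ' ψ' : ℝ} (hθ : θ ∈ Set.Ioo 0 π)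
    (hθ' : θ' ∈ Set.Ioo 0 π) :
    eulerK φ' * eulerA θ' * eulerK ψ' = eulerK φ * eulerA θ * eulerK ψ ↔
      θ' = θ ∧ (((φ' : Angle) = φ ∧ (ψ' : Angle) = ψ) ∨
        ((φ' : Angle) = φ + π ∧ (ψ' : Angle) = ψ + π)) := by
  constructor
  · intro h
    rw [eulerK_mul_mul_eulerK, eulerK_mul_mul_eulerK] at h
    have h00 := congrFun (congrFun h 0) 0
    have h01 := congrFun (congrFun h 0) 1
    simp only [eulerA, of_apply, cons_val', cons_val_zero, cons_val_one, empty_val',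
      cons_val_fin_one] at h00 h01
    have hθθ' : θ' = θ := by
      have hcos := congrArg norm h00
      rw [norm_mul, norm_mul, mul_comm I, mul_comm I, norm_exp_ofReal_mul_I, norm_exp_ofReal_mul_I,
        norm_real, norm_real, Real.norm_of_nonneg (cos_half_pos hθ').le,
        Real.norm_of_nonneg (cos_half_pos hθ).le, one_mul, one_mul] at hcos
      have hhalf : θ' / 2 = θ / 2 :=
        Real.injOn_cos (show θ' / 2 ∈ Set.Icc 0 π by constructor <;> linarith [hθ'.1, hθ'.2])
          (show θ / 2 ∈ Set.Icc 0 π by constructor <;> linarith [hθ.1, hθ.2]) hcos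
      linarith
    subst hθθ'
    refine ⟨rfl, Angle.eq_and_eq_or_of_add_eq_of_sub_eq ?_ ?_⟩
    · rw [← Angle.coe_add, ← Angle.coe_add, ← exp_I_mul_eq_exp_I_mul_iff]
      exact mul_right_cancel₀ (by exact_mod_cast (cos_half_pos hθ).ne') h00
    · rw [← Angle.coe_sub, ← Angle.coe_sub, ← exp_I_mul_eq_exp_I_mul_iff]
      refine mul_right_cancel₀ (mul_ne_zero I_ne_zero ?_) h01
      exact_mod_cast (sin_half_pos hθ).ne'
  · rintro ⟨rfl, ⟨hφ, hψ⟩ | ⟨hφ, hψ⟩⟩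
    · rw [eulerK_congr hφ, eulerK_congr hψ]
    · rw [← Angle.coe_add] at hφ hψ
      rw [eulerK_congr hφ, eulerK_congr hψ, eulerK_add_pi, eulerK_add_pi, neg_mul, neg_mul_neg]

/-- The Euler-angle parametrization of SU(2) is two-to-one on the open box
`(0,2π) × (0,π) × (0,2π)`: two parameter triples give the same matrix iff the
`θ`'s agree and either the `φ`'s and `ψ`'s agree, or they differ by `π` mod `2π`.
In particular `k_{φ+π} a_θ k_{ψ+π} = k_φ a_θ k_ψ` for all real `φ, θ, ψ`. -/
theorem SU2_euler_angle_two_to_one :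
    (∀ φ θ ψ φ' θ' ψ' : ℝ,
      φ ∈ Set.Ioo 0 (2 * π) → θ ∈ Set.Ioo 0 π → ψ ∈ Set.Ioo 0 (2 * π) →
      φ' ∈ Set.Ioo 0 (2 * π) → θ' ∈ Set.Ioo 0 π → ψ' ∈ Set.Ioo 0 (2 * π) →
      (eulerK φ' * eulerA θ' * eulerK ψ' = eulerK φ * eulerA θ * eulerK ψ ↔
        θ' = θ ∧ ((φ' = φ ∧ ψ' = ψ) ∨
          ((∃ m : ℤ, φ' = φ + π + 2 * π * m) ∧ (∃ n : ℤ, ψ' = ψ + π + 2 * π * n))))) ∧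
    (∀ φ θ ψ : ℝ,
      eulerK (φ + π) * eulerA θ * eulerK (ψ + π) = eulerK φ * eulerA θ * eulerK ψ) := by
  refine ⟨fun φ θ ψ φ' θ' ψ' hφ hθ hψ hφ' hθ' hψ' ↦ ?_, fun φ θ ψ ↦ ?_⟩
  · rw [eulerK_mul_eulerA_mul_eulerK_eq_iff hθ hθ',
      Angle.coe_eq_coe_iff_of_mem_Ico (Set.Ioo_subset_Ico_self hφ')
        (Set.Ioo_subset_Ico_self hφ),
      Angle.coe_eq_coe_iff_of_mem_Ico (Set.Ioo_subset_Ico_self hψ')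
        (Set.Ioo_subset_Ico_self hψ),
      Angle.coe_eq_coe_add_pi_iff, Angle.coe_eq_coe_add_pi_iff]
  · rw [eulerK_add_pi, eulerK_add_pi, neg_mul, neg_mul_neg]
end
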